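/- arXiv:2202.09933 — 5 statements merged into one kernel-verified Lean document; each statement's English description precedes it below -/
import Mathlib

section
/- Let L, N ≥ 1 be integers, let p_ℓ ≥ 0 for ℓ ∈ {1, …, L}, and let μ_i > 0 and β_{i,ℓ} > 0 for i ∈ {1, …, N} and ℓ ∈ {1, …, L}. Then Σ_{ℓ=1}^L p_ℓ · log( (Σ_{i=1}^N μ_i) / (Σ_{i=1}^N β_{i,ℓ}) ) ≤ max_{1 ≤ i ≤ N} Σ_{ℓ=1}^L p_ℓ · log( μ_i / β_{i,ℓ} ). -/
open Real Finset

/-- **Burnashev's Lemma 7.** For non-negative weights `p ℓ`, positive `μ i` and positive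
`β i ℓ`, one has
`∑ ℓ, p ℓ * log ((∑ i, μ i) / (∑ i, β i ℓ)) ≤ max_i ∑ ℓ, p ℓ * log (μ i / β i ℓ)`. -/
theorem stmt2 (L N : ℕ) (hL : 1 ≤ L) (hN : 1 ≤ N)
    (p : Fin L → ℝ) (hp : ∀ ℓ, 0 ≤ p ℓ)
    (μ : Fin N → ℝ) (hμ : ∀ i, 0 < μ i)
    (β : Fin N → Fin L → ℝ) (hβ : ∀ i ℓ, 0 < β i ℓ) :
    ∑ ℓ, p ℓ * Real.log ((∑ i, μ i) / (∑ i, β i ℓ)) ≤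
      Finset.univ.sup' (Finset.univ_nonempty_iff.mpr ⟨⟨0, hN⟩⟩)
        (fun i => ∑ ℓ, p ℓ * Real.log (μ i / β i ℓ)) := by
  set S : ℝ := ∑ i, μ i with hS
  have hSpos : 0 < S := Finset.sum_pos (fun i _ => hμ i) ⟨⟨0, hN⟩, Finset.mem_univ _⟩
  set w : Fin N → ℝ := fun i => μ i / S with hw
  have hwpos : ∀ i, 0 < w i := fun i => div_pos (hμ i) hSpos
  have hwsum : ∑ i, w i = 1 := by
    rw [← Finset.sum_div, ← hS, div_self hSpos.ne']
  -- key pointwise inequality via Jensen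
  have key : ∀ ℓ, Real.log (S / ∑ i, β i ℓ) ≤ ∑ i, w i * Real.log (μ i / β i ℓ) := by
    intro ℓ
    have hBpos : 0 < ∑ i, β i ℓ := Finset.sum_pos (fun i _ => hβ i ℓ) ⟨⟨0, hN⟩, Finset.mem_univ _⟩
    have jensen : ∑ i, w i • Real.log (β i ℓ / μ i) ≤
        Real.log (∑ i, w i • (β i ℓ / μ i)) :=
      (strictConcaveOn_log_Ioi.concaveOn).le_map_sum (fun i _ => (hwpos i).le) hwsum
        (fun i _ => div_pos (hβ i ℓ) (hμ i))
    have hsum : ∑ i, w i • (β i ℓ / μ i) = (∑ i, β i ℓ) / S := by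
      rw [Finset.sum_div]
      refine Finset.sum_congr rfl fun i _ => ?_
      rw [smul_eq_mul, hw]
      rw [div_mul_div_comm, mul_comm S (μ i), mul_div_mul_left _ _ (hμ i).ne']
    rw [hsum] at jensen
    have hlog : Real.log (S / ∑ i, β i ℓ) = - Real.log ((∑ i, β i ℓ) / S) := by
      rw [← Real.log_inv, inv_div]
    rw [hlog]
    have : ∑ i, w i * Real.log (μ i / β i ℓ) = - ∑ i, w i • Real.log (β i ℓ / μ i) := by
      rw [← Finset.sum_neg_distrib]
      refine Finset.sum_congr rfl fun i _ => ?_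
      rw [smul_eq_mul, ← mul_neg, ← Real.log_inv, inv_div]
    rw [this]
    linarith
  have step1 : ∑ ℓ, p ℓ * Real.log (S / ∑ i, β i ℓ) ≤
      ∑ ℓ, p ℓ * ∑ i, w i * Real.log (μ i / β i ℓ) :=
    Finset.sum_le_sum fun ℓ _ => mul_le_mul_of_nonneg_left (key ℓ) (hp ℓ)
  refine step1.trans ?_
  have swap : ∑ ℓ, p ℓ * ∑ i, w i * Real.log (μ i / β i ℓ) =
      ∑ i, w i * ∑ ℓ, p ℓ * Real.log (μ i / β i ℓ) := by
    simp_rw [Finset.mul_sum]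
    rw [Finset.sum_comm]
    exact Finset.sum_congr rfl fun i _ => Finset.sum_congr rfl fun ℓ _ => by ring
  rw [swap]
  have hmax : ∀ i, ∑ ℓ, p ℓ * Real.log (μ i / β i ℓ) ≤
      Finset.univ.sup' (Finset.univ_nonempty_iff.mpr ⟨⟨0, hN⟩⟩)
        (fun i => ∑ ℓ, p ℓ * Real.log (μ i / β i ℓ)) :=
    fun i => Finset.le_sup' (f := fun i => ∑ ℓ, p ℓ * Real.log (μ i / β i ℓ)) (Finset.mem_univ i)
  calc ∑ i, w i * ∑ ℓ, p ℓ * Real.log (μ i / β i ℓ)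
      ≤ ∑ i, w i * (Finset.univ.sup' (Finset.univ_nonempty_iff.mpr ⟨⟨0, hN⟩⟩)
        (fun i => ∑ ℓ, p ℓ * Real.log (μ i / β i ℓ))) :=
        Finset.sum_le_sum fun i _ => mul_le_mul_of_nonneg_left (hmax i) (hwpos i).le
    _ = _ := by rw [← Finset.sum_mul, hwsum, one_mul]
end

section
/- Let (F_n)_{n∈ℕ} be a filtration on a probability space, let (H_n)_{n∈ℕ} be a non-negative, integrable process adapted to (F_n), let ε ≥ 0, let N ∈ ℕ, and let (k_{1,r})_{r≥1} be non-negative real numbers. Assume that for every n, almost surely on the event {H_n ≥ ε} one has E[H_{n+1} − H_n | F_n] ≥ −k_{1,n+1}. Define the stopping time τ = min( inf{ t ≥ 0 : H_t ≤ ε }, N ). Then the stopped compensated process L_n := H_{n ∧ τ} + Σ_{r=1}^{n ∧ τ} k_{1,r} is a submartingale with respect to (F_n). -/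
/-!
Put `Y n = H n + ∑ r ∈ Icc 1 n, k r`, so that the process in question is `Y` stopped at `τ`.
The increment of the stopped process from `n` to `n + 1` is `1_{n < τ} (Y (n + 1) - Y n)`.
Since `{n < τ}` is `ℱ n`-measurable and `H n > ε` on it, its conditional expectation given
`ℱ n` is `1_{n < τ} (E[H (n + 1) - H n | ℱ n] + k (n + 1)) ≥ 0`.
-/

open MeasureTheory

namespace MeasureTheory

variable {Ω E : Type*} {m : MeasurableSpace Ω}

lemma stoppedProcess_succ_sub [AddGroup E] (u : ℕ → Ω → E) (τ : Ω → WithTop ℕ) (n : ℕ) :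
    stoppedProcess u τ (n + 1) - stoppedProcess u τ n =
      {ω | (n : WithTop ℕ) < τ ω}.indicator (u (n + 1) - u n) := by
  ext ω
  simp only [Pi.sub_apply, Set.indicator_apply, Set.mem_ofPred_eq]
  split_ifs with h
  · have h' : ((n + 1 : ℕ) : WithTop ℕ) ≤ τ ω := by
      exact_mod_cast ENat.natCast_add_one_le_iff.mpr h
    rw [stoppedProcess_eq_of_le (u := u) (i := n + 1) h',
      stoppedProcess_eq_of_le (u := u) (i := n) h.le]
  · rw [not_lt] at h
    rw [stoppedProcess_eq_of_ge (u := u) (i := n) h,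
      stoppedProcess_eq_of_ge (u := u) (i := n + 1) (h.trans (by simp)), sub_self]

theorem submartingale_stoppedProcess_of_condExp_sub_nonneg [NormedAddCommGroup E]
    [NormedSpace ℝ E] [CompleteSpace E] [PartialOrder E] [IsOrderedAddMonoid E]
    [ClosedIciTopology E] [IsOrderedModule ℝ E] {μ : Measure Ω} [IsFiniteMeasure μ]
    {ℱ : Filtration ℕ m} {u : ℕ → Ω → E} {τ : Ω → WithTop ℕ}
    (hadp : StronglyAdapted ℱ u) (hint : ∀ n, Integrable (u n) μ) (hτ : IsStoppingTime ℱ τ)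
    (hdrift : ∀ n : ℕ, ∀ᵐ ω ∂μ, (n : WithTop ℕ) < τ ω → 0 ≤ μ[u (n + 1) - u n | ℱ n] ω) :
    Submartingale (stoppedProcess u τ) ℱ μ := by
  refine submartingale_of_condExp_sub_nonneg_nat (hadp.stoppedProcess_of_discrete hτ)
    (integrable_stoppedProcess hτ hint) fun n => ?_
  have hA : MeasurableSet[ℱ n] {ω | (n : WithTop ℕ) < τ ω} := hτ.measurableSet_gt n
  rw [stoppedProcess_succ_sub]
  filter_upwards [condExp_indicator ((hint (n + 1)).sub (hint n)) hA, hdrift n] with ω hω hdriftω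
  rw [Pi.zero_apply, hω, Set.indicator_apply]
  split_ifs with hlt
  exacts [hdriftω hlt, le_rfl]

lemma hittingBtwn_zero_eq_sInf {β : Type*} (u : ℕ → Ω → β) (s : Set β) (N : ℕ) (ω : Ω) :
    hittingBtwn u s 0 N ω = sInf ({t | u t ω ∈ s} ∪ {N}) := by
  refine le_antisymm ?_ ?_
  · rcases Nat.sInf_mem (s := {t | u t ω ∈ s} ∪ {N}) ⟨N, Or.inr rfl⟩ with hmem | hN
    · exact hittingBtwn_le_of_mem (Nat.zero_le _) (Nat.sInf_le (Or.inr rfl)) hmem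
    · rw [hN]; exact hittingBtwn_le ω
  · rcases (hittingBtwn_le (u := u) (s := s) (n := 0) ω).lt_or_eq with hlt | heq
    · exact Nat.sInf_le (Or.inl (hittingBtwn_mem_set_of_hittingBtwn_lt hlt))
    · rw [heq]; exact Nat.sInf_le (Or.inr rfl)

end MeasureTheory

theorem stmt3_general {Ω : Type*} {m : MeasurableSpace Ω} {μ : Measure Ω} [IsProbabilityMeasure μ]
    {ℱ : Filtration ℕ m} {H : ℕ → Ω → ℝ}
    (hadp : Adapted ℱ H) (hint : ∀ n, Integrable (H n) μ)
    {ε : ℝ} (N : ℕ) {k : ℕ → ℝ}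
    (hdrift : ∀ n, ∀ᵐ ω ∂μ, ε ≤ H n ω →
      -(k (n + 1)) ≤ (μ[H (n + 1) - H n | ℱ n]) ω) :
    Submartingale
      (fun n ω =>
        H (min n (sInf ({t | H t ω ≤ ε} ∪ {N}))) ω +
          ∑ r ∈ Finset.Icc 1 (min n (sInf ({t | H t ω ≤ ε} ∪ {N}))), k r)
      ℱ μ := by
  set Y : ℕ → Ω → ℝ := fun n ω => H n ω + ∑ r ∈ Finset.Icc 1 n, k r
  set τ : Ω → ℕ := fun ω => sInf ({t | H t ω ≤ ε} ∪ {N})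
  have hτ : IsStoppingTime ℱ (fun ω => (τ ω : WithTop ℕ)) := by
    have := hadp.isStoppingTime_hittingBtwn (s := Set.Iic ε) (n := 0) (n' := N) measurableSet_Iic
    simp only [hittingBtwn_zero_eq_sInf, Set.mem_Iic] at this
    exact this
  change Submartingale (stoppedProcess Y fun ω => (τ ω : WithTop ℕ)) ℱ μ
  refine submartingale_stoppedProcess_of_condExp_sub_nonneg ?_ ?_ hτ fun n => ?_
  · exact fun n => (hadp.stronglyAdapted n).add_const _
  · exact fun n => (hint n).add (integrable_const _)
  have hinc : Y (n + 1) - Y n = H (n + 1) - H n + fun _ => k (n + 1) := by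
    ext ω
    simp only [Y, Pi.add_apply, Pi.sub_apply, Finset.sum_Icc_succ_top (Nat.le_add_left 1 n)]
    ring
  have hce : μ[Y (n + 1) - Y n | ℱ n] =ᵐ[μ] μ[H (n + 1) - H n | ℱ n] + fun _ => k (n + 1) := by
    rw [hinc]
    refine (condExp_add ((hint (n + 1)).sub (hint n)) (integrable_const _) _).trans ?_
    rw [condExp_const (ℱ.le n)]
  filter_upwards [hce, hdrift n] with ω hceω hdriftω hlt
  have hεH : ε ≤ H n ω :=
    (not_le.mp fun hle => Nat.notMem_of_lt_sInf (WithTop.coe_lt_coe.mp hlt) (Or.inl hle)).le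
  rw [hceω, Pi.add_apply]
  linarith [hdriftω hεH]

/-- Let `(H_n)` be a non-negative integrable process adapted to the filtration `(ℱ_n)`,
`ε ≥ 0`, `N ∈ ℕ`, and `k r ≥ 0`. Assume that for every `n`, almost surely on `{H_n ≥ ε}`
one has `E[H_{n+1} - H_n | ℱ_n] ≥ -k_{n+1}`. With the stopping time
`τ = min(inf {t : H_t ≤ ε}, N)` (here realized as `sInf ({t | H_t ≤ ε} ∪ {N})`, which agrees
with the `inf ∅ = +∞` convention), the stopped compensated process
`L_n = H_{n ∧ τ} + ∑_{r=1}^{n ∧ τ} k_r` is a submartingale. -/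
theorem stmt3 {Ω : Type*} {m : MeasurableSpace Ω} {μ : Measure Ω} [IsProbabilityMeasure μ]
    {ℱ : Filtration ℕ m} {H : ℕ → Ω → ℝ}
    (hadp : Adapted ℱ H) (hint : ∀ n, Integrable (H n) μ)
    (hnn : ∀ n ω, 0 ≤ H n ω)
    {ε : ℝ} (hε : 0 ≤ ε) (N : ℕ) {k : ℕ → ℝ} (hk : ∀ r, 0 ≤ k r)
    (hdrift : ∀ n, ∀ᵐ ω ∂μ, ε ≤ H n ω →
      -(k (n + 1)) ≤ (μ[H (n + 1) - H n | ℱ n]) ω) :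
    Submartingale
      (fun n ω =>
        H (min n (sInf ({t | H t ω ≤ ε} ∪ {N}))) ω +
          ∑ r ∈ Finset.Icc 1 (min n (sInf ({t | H t ω ≤ ε} ∪ {N}))), k r)
      ℱ μ :=
  stmt3_general hadp hint N hdrift
end

section
/- Let ε, I, D, k₃ be strictly positive real numbers. Then there exists λ₀ > 0 such that for every λ ∈ (0, λ₀) and every y ∈ (−k₃, 0), one has (ε/I)(e^y − 1) − y/D < (1 − e^{λ y})/(λ D). -/
/-!
Both sides are compared with linear-quadratic expressions in `y`. Writing `c = e^{-k₃}`, the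
bound `e^x - 1 ≤ x e^x` gives `e^y - 1 < c y` on `(-k₃, 0)`, so the left side is below
`(ε c / I) y - y / D`. The same bound together with `1 + x ≤ e^x` gives
`1 - e^x ≥ -x - x²` for `x ≤ 0`, so the right side is at least `-y/D - λ y²/D`. The claim
then reduces to `λ (-y) ≤ ε c D / I`, which holds for `λ < λ₀ := ε c D / (I k₃)`.
-/

open Real

lemma Real.exp_sub_one_le_mul_exp (x : ℝ) : exp x - 1 ≤ x * exp x := by
  have h := mul_le_mul_of_nonneg_right (one_sub_le_exp_neg x) (exp_pos x).le
  rw [← exp_add, neg_add_cancel, exp_zero] at h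
  linarith

lemma Real.neg_sub_sq_le_one_sub_exp {x : ℝ} (hx : x ≤ 0) : -x - x ^ 2 ≤ 1 - exp x := by
  have h := mul_le_mul_of_nonpos_left (add_one_le_exp x) hx
  linarith [exp_sub_one_le_mul_exp x]

lemma Real.exp_sub_one_lt_exp_mul {k y : ℝ} (hky : -k < y) (hy : y < 0) :
    exp y - 1 < exp (-k) * y :=
  calc exp y - 1 ≤ y * exp y := exp_sub_one_le_mul_exp y
    _ < exp (-k) * y := by rw [mul_comm]; exact mul_lt_mul_of_neg_right (exp_lt_exp.2 hky) hy

lemma Real.neg_div_sub_le_one_sub_exp_div {lam D y : ℝ} (hlam : 0 < lam) (hD : 0 < D)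
    (hy : y ≤ 0) : -y / D - lam * y ^ 2 / D ≤ (1 - exp (lam * y)) / (lam * D) := by
  have h := neg_sub_sq_le_one_sub_exp (mul_nonpos_of_nonneg_of_nonpos hlam.le hy)
  rw [le_div_iff₀ (mul_pos hlam hD)]
  calc (-y / D - lam * y ^ 2 / D) * (lam * D) = -(lam * y) - (lam * y) ^ 2 := by
        field_simp
    _ ≤ 1 - exp (lam * y) := h

/-- For strictly positive `ε, I, D, k₃` there exists `λ₀ > 0` such that for every
`λ ∈ (0, λ₀)` and every `y ∈ (-k₃, 0)` one has
`(ε/I)(e^y - 1) - y/D < (1 - e^{λ y})/(λ D)`. -/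
theorem stmt4 (ε I D k₃ : ℝ) (hε : 0 < ε) (hI : 0 < I) (hD : 0 < D) (hk : 0 < k₃) :
    ∃ lam₀ > 0, ∀ lam : ℝ, 0 < lam → lam < lam₀ → ∀ y : ℝ, -k₃ < y → y < 0 →
      (ε / I) * (Real.exp y - 1) - y / D < (1 - Real.exp (lam * y)) / (lam * D) := by
  set a := ε / I * exp (-k₃) with ha
  have ha_pos : 0 < a := by positivity
  refine ⟨a * D / k₃, by positivity, fun lam hlam hlam₀ y hky hy => ?_⟩
  have hlam_y : lam * -y ≤ a * D := by
    rw [lt_div_iff₀ hk] at hlam₀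
    nlinarith
  have hquad : a * y ≤ -(lam * y ^ 2 / D) := by
    rw [le_neg, div_le_iff₀ hD]
    nlinarith
  calc ε / I * (exp y - 1) - y / D < a * y - y / D := by
        rw [ha, mul_assoc]
        gcongr
        exact exp_sub_one_lt_exp_mul hky hy
    _ ≤ -y / D - lam * y ^ 2 / D := by rw [neg_div]; linarith
    _ ≤ (1 - exp (lam * y)) / (lam * D) := neg_div_sub_le_one_sub_exp_div hlam hD hy.le
end

section
/- Let n ≥ 1 and let W, X₁, …, X_n, Y₁, …, Y_n be random variables on a probability space taking values in finite sets. Suppose that for each i ∈ {1, …, n}: (a) X_i = e_i(W, Y₁, …, Y_{i−1}) almost surely for a deterministic function e_i (causal encoding with feedback), and (b) Y_i is conditionally independent of W given (X_i, Y₁, …, Y_{i−1}). Then I(W ; Y₁, …, Y_n) = Σ_{i=1}^n I(X_i ; Y_i | Y₁, …, Y_{i−1}); that is, the mutual information between the message and the outputs equals the directed mutual information from X^n to Y^n. -/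
open MeasureTheory

/-- The probability of a set, as a real number. -/
noncomputable def prob {Ω : Type*} [MeasurableSpace Ω] (μ : Measure Ω) (s : Set Ω) : ℝ :=
  (μ s).toReal

/-- Shannon entropy (base 2) of a finite-valued random variable. -/
noncomputable def entropy {Ω A : Type*} [MeasurableSpace Ω] [Fintype A]
    (μ : Measure Ω) (U : Ω → A) : ℝ :=
  ∑ u : A, -(prob μ (U ⁻¹' {u})) * Real.logb 2 (prob μ (U ⁻¹' {u}))

/-- Conditional Shannon entropy (base 2) `H(U | V)`. -/
noncomputable def condEntropy {Ω A B : Type*} [MeasurableSpace Ω] [Fintype A] [Fintype B]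
    (μ : Measure Ω) (U : Ω → A) (V : Ω → B) : ℝ :=
  ∑ v : B, ∑ u : A,
    -(prob μ (U ⁻¹' {u} ∩ V ⁻¹' {v})) *
      Real.logb 2 (prob μ (U ⁻¹' {u} ∩ V ⁻¹' {v}) / prob μ (V ⁻¹' {v}))

/-- Mutual information `I(U ; V) = H(U) + H(V) - H(U, V)`. -/
noncomputable def mutInfo {Ω A B : Type*} [MeasurableSpace Ω] [Fintype A] [Fintype B]
    (μ : Measure Ω) (U : Ω → A) (V : Ω → B) : ℝ :=
  entropy μ U + entropy μ V - entropy μ (fun ω => (U ω, V ω))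

/-- Conditional mutual information `I(X ; Y | Z) = H(X|Z) + H(Y|Z) - H(X,Y|Z)`. -/
noncomputable def condMutInfo {Ω A B C : Type*} [MeasurableSpace Ω]
    [Fintype A] [Fintype B] [Fintype C]
    (μ : Measure Ω) (X : Ω → A) (Y : Ω → B) (Z : Ω → C) : ℝ :=
  condEntropy μ X Z + condEntropy μ Y Z - condEntropy μ (fun ω => (X ω, Y ω)) Z

/-- The vector of past outputs `Y^{i-1} = (Y_0, …, Y_{i-1})` before time `i`. -/
def past {Ω 𝒴 : Type*} {n : ℕ} (Y : Fin n → Ω → 𝒴) (i : Fin n) (ω : Ω) : Fin i → 𝒴 :=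
  fun j => Y (j.castLT (j.isLt.trans i.isLt)) ω

/-!
Since `X_i` is a function of `(W, Y^{i-1})` and `Y_i` depends on `W` only through
`(X_i, Y^{i-1})`, each term `I(X_i ; Y_i | Y^{i-1})` equals `I(W ; Y_i | Y^{i-1})`: `X_i` may be
added to or dropped from any joint entropy that already involves `W` and `Y^{i-1}`, and the
conditional independence says `I(Y_i ; W | X_i, Y^{i-1}) = 0`. The sum of the
`I(W ; Y_i | Y^{i-1})` is `I(W ; Y^n)` by the chain rule for mutual information.
-/

open Function

lemma preimage_pair_singleton {Ω A B : Type*} (U : Ω → A) (V : Ω → B) (u : A) (v : B) :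
    (fun ω => (U ω, V ω)) ⁻¹' {(u, v)} = U ⁻¹' {u} ∩ V ⁻¹' {v} := by
  rw [← Set.singleton_prod_singleton, Set.mk_preimage_prod]

section InformationMeasures

variable {Ω A B C D : Type*} [MeasurableSpace Ω] {μ : Measure Ω}

lemma prob_nonneg (s : Set Ω) : 0 ≤ prob μ s := ENNReal.toReal_nonneg

lemma prob_mono [IsFiniteMeasure μ] {s t : Set Ω} (h : s ⊆ t) : prob μ s ≤ prob μ t :=
  ENNReal.toReal_mono (measure_ne_top μ t) (measure_mono h)

lemma prob_preimage_comp [IsFiniteMeasure μ] [Fintype A] [MeasurableSpace A]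
    [MeasurableSingletonClass A] [DecidableEq B] {T : Ω → A} (hT : Measurable T) (f : A → B)
    (b : B) :
    prob μ ((fun ω => f (T ω)) ⁻¹' {b}) = ∑ a with f a = b, prob μ (T ⁻¹' {a}) := by
  unfold prob
  rw [← ENNReal.toReal_sum fun a _ => measure_ne_top μ _,
    sum_measure_preimage_singleton _ fun a _ => hT (measurableSet_singleton a)]
  congr 2
  ext ω
  simp

lemma entropy_comp_eq_sum [IsFiniteMeasure μ] [Fintype A] [Fintype B] [MeasurableSpace A]
    [MeasurableSingletonClass A] {T : Ω → A} (hT : Measurable T) (f : A → B) :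
    entropy μ (fun ω => f (T ω)) =
      ∑ a, -prob μ (T ⁻¹' {a}) * Real.logb 2 (prob μ ((fun ω => f (T ω)) ⁻¹' {f a})) := by
  classical
  set q : B → ℝ := fun b => prob μ ((fun ω => f (T ω)) ⁻¹' {b})
  calc entropy μ (fun ω => f (T ω)) = ∑ b, -q b * Real.logb 2 (q b) := rfl
    _ = ∑ b, ∑ a with f a = b, -prob μ (T ⁻¹' {a}) * Real.logb 2 (q (f a)) := by
      refine Finset.sum_congr rfl fun b _ => ?_
      nth_rw 1 [show q b = _ from prob_preimage_comp hT f b]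
      rw [← Finset.sum_neg_distrib, Finset.sum_mul]
      refine Finset.sum_congr rfl fun a ha => ?_
      rw [(Finset.mem_filter.1 ha).2]
    _ = ∑ a, -prob μ (T ⁻¹' {a}) * Real.logb 2 (q (f a)) := Finset.sum_fiberwise _ _ _

lemma entropy_comp_of_injective [Fintype A] [Fintype B] {f : A → B} (hf : Injective f)
    (T : Ω → A) : entropy μ (fun ω => f (T ω)) = entropy μ T := by
  classical
  have hpre (a : A) : (fun ω => f (T ω)) ⁻¹' {f a} = T ⁻¹' {a} := by
    ext ω
    simp [hf.eq_iff]
  have hempty (b : B) (hb : b ∉ Finset.univ.image f) : (fun ω => f (T ω)) ⁻¹' {b} = ∅ := by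
    ext ω
    simpa using fun h => hb (Finset.mem_image.2 ⟨T ω, Finset.mem_univ _, h⟩)
  unfold entropy
  rw [← Finset.sum_subset (Finset.subset_univ (Finset.univ.image f))
      fun b _ hb => by simp [hempty b hb, prob],
    Finset.sum_image fun a _ b _ h => hf h]
  simp only [hpre]

lemma entropy_congr_ae [Fintype A] {T T' : Ω → A} (h : T =ᵐ[μ] T') :
    entropy μ T = entropy μ T' := by
  unfold entropy prob
  refine Finset.sum_congr rfl fun a _ => ?_
  rw [measure_congr (h.preimage {a})]

lemma entropy_eq_of_ae_eq_comp [Fintype A] [Fintype B] {f : A → B} (hf : Injective f)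
    {T : Ω → A} {T' : Ω → B} (h : T' =ᵐ[μ] fun ω => f (T ω)) : entropy μ T' = entropy μ T :=
  (entropy_congr_ae h).trans (entropy_comp_of_injective hf T)

lemma entropy_of_subsingleton [IsProbabilityMeasure μ] [Fintype A] [Subsingleton A]
    (T : Ω → A) : entropy μ T = 0 := by
  refine Finset.sum_eq_zero fun a _ => ?_
  have : T ⁻¹' {a} = Set.univ := Set.eq_univ_of_forall fun ω => Subsingleton.elim (T ω) a
  simp [this, prob]

lemma neg_mul_logb_div_of_le {b p q : ℝ} (hp : 0 ≤ p) (hpq : p ≤ q) :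
    -p * Real.logb b (p / q) = -p * Real.logb b p - -p * Real.logb b q := by
  rcases hp.eq_or_lt with rfl | hp
  · simp
  · rw [Real.logb_div hp.ne' (hp.trans_le hpq).ne']
    ring

lemma condEntropy_eq_entropy_sub [IsFiniteMeasure μ] [Fintype A] [Fintype B]
    [MeasurableSpace A] [MeasurableSingletonClass A] [MeasurableSpace B]
    [MeasurableSingletonClass B] {U : Ω → A} {V : Ω → B} (hU : Measurable U)
    (hV : Measurable V) :
    condEntropy μ U V = entropy μ (fun ω => (U ω, V ω)) - entropy μ V := by
  have hVsum := entropy_comp_eq_sum (μ := μ) (hU.prodMk hV) Prod.snd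
  dsimp only at hVsum
  rw [hVsum, entropy, ← Finset.sum_sub_distrib, Fintype.sum_prod_type_right]
  refine Finset.sum_congr rfl fun v _ => Finset.sum_congr rfl fun u _ => ?_
  rw [preimage_pair_singleton]
  exact neg_mul_logb_div_of_le (prob_nonneg _) (prob_mono Set.inter_subset_right)

lemma condMutInfo_eq_entropy [IsFiniteMeasure μ] [Fintype A] [Fintype B] [Fintype C]
    [MeasurableSpace A] [MeasurableSingletonClass A] [MeasurableSpace B]
    [MeasurableSingletonClass B] [MeasurableSpace C] [MeasurableSingletonClass C]
    {U : Ω → A} {V : Ω → B} {S : Ω → C} (hU : Measurable U) (hV : Measurable V)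
    (hS : Measurable S) :
    condMutInfo μ U V S = entropy μ (fun ω => (U ω, S ω)) + entropy μ (fun ω => (V ω, S ω)) -
      entropy μ (fun ω => ((U ω, V ω), S ω)) - entropy μ S := by
  rw [condMutInfo, condEntropy_eq_entropy_sub hU hS, condEntropy_eq_entropy_sub hV hS,
    condEntropy_eq_entropy_sub (hU.prodMk hV) hS]
  ring

/-- Conditional independence of `U` and `V` given `S`, with denominators cleared so that atoms
`S = s` of probability zero need no separate treatment. -/
def CondIndepDiscrete (μ : Measure Ω) (U : Ω → A) (V : Ω → B) (S : Ω → C) : Prop :=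
  ∀ u v s, prob μ (U ⁻¹' {u} ∩ V ⁻¹' {v} ∩ S ⁻¹' {s}) * prob μ (S ⁻¹' {s}) =
    prob μ (U ⁻¹' {u} ∩ S ⁻¹' {s}) * prob μ (V ⁻¹' {v} ∩ S ⁻¹' {s})

lemma condIndepDiscrete_of_div [IsFiniteMeasure μ] {U : Ω → A} {V : Ω → B} {S : Ω → C}
    (h : ∀ u v s, 0 < prob μ (S ⁻¹' {s}) →
      prob μ (U ⁻¹' {u} ∩ V ⁻¹' {v} ∩ S ⁻¹' {s}) / prob μ (S ⁻¹' {s}) =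
        prob μ (U ⁻¹' {u} ∩ S ⁻¹' {s}) / prob μ (S ⁻¹' {s}) *
          (prob μ (V ⁻¹' {v} ∩ S ⁻¹' {s}) / prob μ (S ⁻¹' {s}))) :
    CondIndepDiscrete μ U V S := by
  intro u v s
  rcases (prob_nonneg (μ := μ) (S ⁻¹' {s})).eq_or_lt with hS | hS
  · have hUS : prob μ (U ⁻¹' {u} ∩ S ⁻¹' {s}) = 0 :=
      le_antisymm (hS ▸ prob_mono Set.inter_subset_right) (prob_nonneg _)
    rw [← hS, hUS, mul_zero, zero_mul]
  · have := h u v s hS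
    field_simp at this
    linear_combination this

lemma mul_logb_add_mul_logb_eq {b p x y z : ℝ} (hp : 0 ≤ p) (hx : p ≤ x) (hy : p ≤ y)
    (hz : p ≤ z) (h : p * z = x * y) :
    p * Real.logb b p + p * Real.logb b z = p * Real.logb b x + p * Real.logb b y := by
  rcases hp.eq_or_lt with rfl | hp
  · simp
  · rw [← mul_add, ← mul_add, ← Real.logb_mul hp.ne' (hp.trans_le hz).ne',
      ← Real.logb_mul (hp.trans_le hx).ne' (hp.trans_le hy).ne', h]

theorem condMutInfo_eq_zero_of_condIndepDiscrete [IsFiniteMeasure μ] [Fintype A] [Fintype B]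
    [Fintype C] [MeasurableSpace A] [MeasurableSingletonClass A] [MeasurableSpace B]
    [MeasurableSingletonClass B] [MeasurableSpace C] [MeasurableSingletonClass C]
    {U : Ω → A} {V : Ω → B} {S : Ω → C} (hU : Measurable U) (hV : Measurable V)
    (hS : Measurable S) (h : CondIndepDiscrete μ U V S) : condMutInfo μ U V S = 0 := by
  -- Expand all four entropies over the atoms of `((U, V), S)`; each summand then vanishes.
  have hT : Measurable fun ω => ((U ω, V ω), S ω) := (hU.prodMk hV).prodMk hS
  have hUS := entropy_comp_eq_sum (μ := μ) hT fun t => (t.1.1, t.2)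
  have hVS := entropy_comp_eq_sum (μ := μ) hT fun t => (t.1.2, t.2)
  have hS' := entropy_comp_eq_sum (μ := μ) hT Prod.snd
  dsimp only at hUS hVS hS'
  rw [condMutInfo_eq_entropy hU hV hS, hUS, hVS, hS', entropy, ← Finset.sum_add_distrib,
    ← Finset.sum_sub_distrib, ← Finset.sum_sub_distrib]
  refine Finset.sum_eq_zero fun ⟨⟨u, v⟩, s⟩ _ => ?_
  simp only [preimage_pair_singleton]
  have hUVS := prob_nonneg (μ := μ) (U ⁻¹' {u} ∩ V ⁻¹' {v} ∩ S ⁻¹' {s})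
  linarith [mul_logb_add_mul_logb_eq (b := 2) hUVS
    (prob_mono (Set.inter_subset_inter_left _ Set.inter_subset_left))
    (prob_mono (Set.inter_subset_inter_left _ Set.inter_subset_right))
    (prob_mono Set.inter_subset_right) (h u v s)]

theorem condMutInfo_eq_of_ae_eq_comp_of_condIndepDiscrete [IsFiniteMeasure μ] [Fintype A]
    [Fintype B] [Fintype C] [Fintype D] [MeasurableSpace A] [MeasurableSingletonClass A]
    [MeasurableSpace B] [MeasurableSingletonClass B] [MeasurableSpace C]
    [MeasurableSingletonClass C] [MeasurableSpace D] [MeasurableSingletonClass D]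
    {W : Ω → A} {X : Ω → B} {Y : Ω → C} {P : Ω → D} (hW : Measurable W) (hX : Measurable X)
    (hY : Measurable Y) (hP : Measurable P) (e : A × D → B)
    (henc : ∀ᵐ ω ∂μ, X ω = e (W ω, P ω))
    (hCI : CondIndepDiscrete μ Y W fun ω => (X ω, P ω)) :
    condMutInfo μ X Y P = condMutInfo μ W Y P := by
  have hzero := condMutInfo_eq_zero_of_condIndepDiscrete hY hW (hX.prodMk hP) hCI
  have hWXP : entropy μ (fun ω => (W ω, (X ω, P ω))) = entropy μ (fun ω => (W ω, P ω)) :=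
    entropy_eq_of_ae_eq_comp (f := fun q => (q.1, (e q, q.2))) (T := fun ω => (W ω, P ω))
      (LeftInverse.injective (g := fun r => (r.1, r.2.2)) fun _ => rfl)
      (by filter_upwards [henc] with ω hω; rw [hω])
  have hYWXP : entropy μ (fun ω => ((Y ω, W ω), (X ω, P ω))) =
      entropy μ (fun ω => ((W ω, Y ω), P ω)) :=
    entropy_eq_of_ae_eq_comp (f := fun q => ((q.1.2, q.1.1), (e (q.1.1, q.2), q.2)))
      (T := fun ω => ((W ω, Y ω), P ω))
      (LeftInverse.injective (g := fun r => ((r.1.2, r.1.1), r.2.2)) fun _ => rfl)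
      (by filter_upwards [henc] with ω hω; rw [hω])
  have hYXP : entropy μ (fun ω => (Y ω, (X ω, P ω))) = entropy μ (fun ω => ((X ω, Y ω), P ω)) :=
    entropy_comp_of_injective (f := fun q : (B × C) × D => (q.1.2, (q.1.1, q.2)))
      (LeftInverse.injective (g := fun r => ((r.2.1, r.1), r.2.2)) fun _ => rfl)
      fun ω => ((X ω, Y ω), P ω)
  rw [condMutInfo_eq_entropy hY hW (hX.prodMk hP)] at hzero
  rw [condMutInfo_eq_entropy hX hY hP, condMutInfo_eq_entropy hW hY hP]
  linarith

lemma mutInfo_comp_of_injective [Fintype A] [Fintype B] [Fintype C] {f : B → C}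
    (hf : Injective f) (U : Ω → A) (V : Ω → B) :
    mutInfo μ U (fun ω => f (V ω)) = mutInfo μ U V := by
  rw [mutInfo, mutInfo, entropy_comp_of_injective hf,
    show entropy μ (fun ω => (U ω, f (V ω))) = entropy μ (fun ω => (U ω, V ω)) from
      entropy_comp_of_injective (injective_id.prodMap hf) fun ω => (U ω, V ω)]

lemma mutInfo_of_subsingleton [IsProbabilityMeasure μ] [Fintype A] [Fintype B] [Subsingleton B]
    (U : Ω → A) (V : Ω → B) : mutInfo μ U V = 0 := by
  have hUV : entropy μ (fun ω => (U ω, V ω)) = entropy μ U :=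
    (entropy_comp_of_injective (f := Prod.fst)
      (fun _ _ h => Prod.ext h (Subsingleton.elim _ _)) fun ω => (U ω, V ω)).symm
  rw [mutInfo, hUV, entropy_of_subsingleton V]
  ring

theorem mutInfo_pair_eq_add_condMutInfo [IsFiniteMeasure μ] [Fintype A] [Fintype B] [Fintype C]
    [MeasurableSpace A] [MeasurableSingletonClass A] [MeasurableSpace B]
    [MeasurableSingletonClass B] [MeasurableSpace C] [MeasurableSingletonClass C]
    {U : Ω → A} {Z : Ω → B} {V : Ω → C} (hU : Measurable U) (hZ : Measurable Z)
    (hV : Measurable V) :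
    mutInfo μ U (fun ω => (Z ω, V ω)) = mutInfo μ U V + condMutInfo μ U Z V := by
  have hassoc : entropy μ (fun ω => (U ω, (Z ω, V ω))) = entropy μ (fun ω => ((U ω, Z ω), V ω)) :=
    entropy_comp_of_injective (f := fun q : (A × B) × C => (q.1.1, (q.1.2, q.2)))
      (LeftInverse.injective (g := fun r => ((r.1, r.2.1), r.2.2)) fun _ => rfl)
      fun ω => ((U ω, Z ω), V ω)
  rw [mutInfo, mutInfo, condMutInfo_eq_entropy hU hZ hV, hassoc]
  ring

theorem mutInfo_eq_sum_condMutInfo_past [IsProbabilityMeasure μ] [Fintype A] [Fintype B]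
    [MeasurableSpace A] [MeasurableSingletonClass A] [MeasurableSpace B]
    [MeasurableSingletonClass B] {U : Ω → A} (hU : Measurable U) :
    ∀ {m : ℕ} (Y : Fin m → Ω → B), (∀ i, Measurable (Y i)) →
      mutInfo μ U (fun ω i => Y i ω) = ∑ i, condMutInfo μ U (Y i) (past Y i)
  | 0, Y, _ => by rw [mutInfo_of_subsingleton, Finset.univ_eq_empty, Finset.sum_empty]
  | m + 1, Y, hY => by
    have hsnoc : (fun ω i => Y i ω) =
        fun ω => Fin.snocEquiv (fun _ => B) (Y (Fin.last m) ω, fun i => Y i.castSucc ω) :=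
      funext fun ω => (Fin.snoc_init_self _).symm
    rw [hsnoc, mutInfo_comp_of_injective (Fin.snocEquiv _).injective,
      mutInfo_pair_eq_add_condMutInfo hU (hY _) (measurable_pi_lambda _ fun i => hY _),
      mutInfo_eq_sum_condMutInfo_past hU _ fun i => hY _, Fin.sum_univ_castSucc]
    rfl

end InformationMeasures

theorem stmt7_general {Ω : Type*} [MeasurableSpace Ω] (μ : Measure Ω) [IsProbabilityMeasure μ]
    {𝒲 𝒳 𝒴 : Type*} [Fintype 𝒲] [Fintype 𝒳] [Fintype 𝒴]
    [MeasurableSpace 𝒲] [MeasurableSingletonClass 𝒲]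
    [MeasurableSpace 𝒳] [MeasurableSingletonClass 𝒳]
    [MeasurableSpace 𝒴] [MeasurableSingletonClass 𝒴]
    (n : ℕ)
    (W : Ω → 𝒲) (X : Fin n → Ω → 𝒳) (Y : Fin n → Ω → 𝒴)
    (hW : Measurable W) (hX : ∀ i, Measurable (X i)) (hY : ∀ i, Measurable (Y i))
    (e : (i : Fin n) → 𝒲 × (Fin i → 𝒴) → 𝒳)
    (henc : ∀ i : Fin n, ∀ᵐ ω ∂μ, X i ω = e i (W ω, past Y i ω))
    (hCI : ∀ (i : Fin n) (y : 𝒴) (w : 𝒲) (x : 𝒳) (yp : Fin i → 𝒴),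
      0 < prob μ ((X i) ⁻¹' {x} ∩ (past Y i) ⁻¹' {yp}) →
      prob μ ((Y i) ⁻¹' {y} ∩ W ⁻¹' {w} ∩ (X i) ⁻¹' {x} ∩ (past Y i) ⁻¹' {yp}) /
          prob μ ((X i) ⁻¹' {x} ∩ (past Y i) ⁻¹' {yp}) =
        (prob μ ((Y i) ⁻¹' {y} ∩ (X i) ⁻¹' {x} ∩ (past Y i) ⁻¹' {yp}) /
            prob μ ((X i) ⁻¹' {x} ∩ (past Y i) ⁻¹' {yp})) *
          (prob μ (W ⁻¹' {w} ∩ (X i) ⁻¹' {x} ∩ (past Y i) ⁻¹' {yp}) /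
            prob μ ((X i) ⁻¹' {x} ∩ (past Y i) ⁻¹' {yp}))) :
    mutInfo μ W (fun ω (i : Fin n) => Y i ω) =
      ∑ i : Fin n, condMutInfo μ (X i) (Y i) (past Y i) := by
  have hpast (i : Fin n) : Measurable (past Y i) := measurable_pi_lambda _ fun _ => hY _
  rw [mutInfo_eq_sum_condMutInfo_past hW Y hY]
  refine Finset.sum_congr rfl fun i _ =>
    (condMutInfo_eq_of_ae_eq_comp_of_condIndepDiscrete hW (hX i) (hY i) (hpast i) (e i) (henc i)
      (condIndepDiscrete_of_div fun y w ⟨x, yp⟩ hpos => ?_)).symm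
  simp only [preimage_pair_singleton, ← Set.inter_assoc] at hpos ⊢
  exact hCI i y w x yp hpos

/-- **Chain rule for causal encoding with feedback.** If `X_i = e_i(W, Y^{i-1})` almost
surely and `Y_i` is conditionally independent of `W` given `(X_i, Y^{i-1})`, then
`I(W ; Y^n) = ∑_{i} I(X_i ; Y_i | Y^{i-1})`, i.e. the mutual information between the message
and the outputs equals the directed mutual information from `X^n` to `Y^n`. -/
theorem stmt7 {Ω : Type*} [MeasurableSpace Ω] (μ : Measure Ω) [IsProbabilityMeasure μ]
    {𝒲 𝒳 𝒴 : Type*} [Fintype 𝒲] [Fintype 𝒳] [Fintype 𝒴]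
    [MeasurableSpace 𝒲] [MeasurableSingletonClass 𝒲]
    [MeasurableSpace 𝒳] [MeasurableSingletonClass 𝒳]
    [MeasurableSpace 𝒴] [MeasurableSingletonClass 𝒴]
    (n : ℕ) (hn : 1 ≤ n)
    (W : Ω → 𝒲) (X : Fin n → Ω → 𝒳) (Y : Fin n → Ω → 𝒴)
    (hW : Measurable W) (hX : ∀ i, Measurable (X i)) (hY : ∀ i, Measurable (Y i))
    (e : (i : Fin n) → 𝒲 × (Fin i → 𝒴) → 𝒳)
    (henc : ∀ i : Fin n, ∀ᵐ ω ∂μ, X i ω = e i (W ω, past Y i ω))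
    (hCI : ∀ (i : Fin n) (y : 𝒴) (w : 𝒲) (x : 𝒳) (yp : Fin i → 𝒴),
      0 < prob μ ((X i) ⁻¹' {x} ∩ (past Y i) ⁻¹' {yp}) →
      prob μ ((Y i) ⁻¹' {y} ∩ W ⁻¹' {w} ∩ (X i) ⁻¹' {x} ∩ (past Y i) ⁻¹' {yp}) /
          prob μ ((X i) ⁻¹' {x} ∩ (past Y i) ⁻¹' {yp}) =
        (prob μ ((Y i) ⁻¹' {y} ∩ (X i) ⁻¹' {x} ∩ (past Y i) ⁻¹' {yp}) /
            prob μ ((X i) ⁻¹' {x} ∩ (past Y i) ⁻¹' {yp})) *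
          (prob μ (W ⁻¹' {w} ∩ (X i) ⁻¹' {x} ∩ (past Y i) ⁻¹' {yp}) /
            prob μ ((X i) ⁻¹' {x} ∩ (past Y i) ⁻¹' {yp}))) :
    mutInfo μ W (fun ω (i : Fin n) => Y i ω) =
      ∑ i : Fin n, condMutInfo μ (X i) (Y i) (past Y i) :=
  stmt7_general μ n W X Y hW hX hY e henc hCI
end

section
/- Let (H_t)_{t∈ℕ} be a non-negative supermartingale with respect to a filtration (F_t)_{t∈ℕ}, let N ∈ ℕ, let τ be a stopping time with τ ≤ N almost surely, and let c > 0. Then E[ Σ_{r=τ+1}^{N} 1{ H_{r−1} ≥ c } ] ≤ N · E[H_τ] / c, where the sum is taken to be 0 when τ = N. -/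
open MeasureTheory

/-! Markov's inequality gives `1{H_s ≥ c} ≤ H_s / c`, so after the shift `s = r - 1` the integrand
is at most `c⁻¹ ∑_{s < N} 1{τ ≤ s} H_s`. By non-negativity and optional stopping,
`E[1{τ ≤ s} H_s] = E[1{τ ≤ s} H_{τ ∨ s}] ≤ E[H_{τ ∨ s}] ≤ E[H_τ]`, and summing over `s < N`
gives the bound. Optional stopping needs `τ ≤ N` everywhere, so `τ` is first replaced by
`min τ N`, which agrees with it almost surely. -/

theorem Finset.sum_Ioc_sub_one_eq_sum_range_ite {M : Type*} [AddCommMonoid M] (g : ℕ → M)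
    (a N : ℕ) :
    ∑ r ∈ Finset.Ioc a N, g (r - 1) = ∑ s ∈ Finset.range N, if a ≤ s then g s else 0 := by
  rw [← Finset.sum_filter, ← Finset.Ico_add_one_add_one_eq_Ioc, ← Finset.map_add_right_Ico,
    Finset.sum_map]
  refine Finset.sum_congr ?_ fun s _ => rfl
  ext s
  simp only [Finset.mem_Ico, Finset.mem_filter, Finset.mem_range]
  omega

theorem Finset.sum_Ioc_ite_le_sum_range_ite_div {f : ℕ → ℝ} (hf : ∀ s, 0 ≤ f s) {c : ℝ}
    (hc : 0 < c) (a N : ℕ) :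
    ∑ r ∈ Finset.Ioc a N, (if c ≤ f (r - 1) then (1 : ℝ) else 0) ≤
      (∑ s ∈ Finset.range N, if a ≤ s then f s else 0) / c := by
  rw [Finset.sum_Ioc_sub_one_eq_sum_range_ite (fun s => if c ≤ f s then (1 : ℝ) else 0),
    Finset.sum_div]
  gcongr with s
  split_ifs with has hcf
  · rwa [one_le_div hc]
  · exact div_nonneg (hf s) hc.le
  · simp

namespace MeasureTheory.Supermartingale

variable {Ω : Type*} {m : MeasurableSpace Ω} {μ : Measure Ω} {ℱ : Filtration ℕ m}
  {H : ℕ → Ω → ℝ}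

theorem integral_stopped_le_of_le [SigmaFiniteFiltration μ ℱ] (hH : Supermartingale H ℱ μ)
    {σ ρ : Ω → ℕ} (hσ : IsStoppingTime ℱ fun ω => (σ ω : WithTop ℕ))
    (hρ : IsStoppingTime ℱ fun ω => (ρ ω : WithTop ℕ)) (hσρ : σ ≤ ρ) {N : ℕ} (hρN : ∀ ω, ρ ω ≤ N) :
    ∫ ω, H (ρ ω) ω ∂μ ≤ ∫ ω, H (σ ω) ω ∂μ := by
  have := hH.neg.expected_stoppedValue_mono hσ hρ (fun ω => WithTop.coe_le_coe.2 (hσρ ω))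
    (fun ω => WithTop.coe_le_coe.2 (hρN ω))
  simp only [stoppedValue, WithTop.untopA, Pi.neg_apply, integral_neg,
    neg_le_neg_iff] at this
  exact this

theorem setIntegral_le_integral_stopped [SigmaFiniteFiltration μ ℱ]
    (hH : Supermartingale H ℱ μ) (hnn : ∀ t, 0 ≤ᵐ[μ] H t) {τ : Ω → ℕ}
    (hτ : IsStoppingTime ℱ fun ω => (τ ω : WithTop ℕ)) {N : ℕ} (hτN : ∀ ω, τ ω ≤ N) {s : ℕ}
    (hsN : s ≤ N) :
    ∫ ω in {ω | τ ω ≤ s}, H s ω ∂μ ≤ ∫ ω, H (τ ω) ω ∂μ := by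
  set ρ : Ω → ℕ := fun ω => max (τ ω) s
  have hρ : IsStoppingTime ℱ fun ω => (ρ ω : WithTop ℕ) := by
    have hmax : (fun ω => (ρ ω : WithTop ℕ)) = fun ω => max (τ ω : WithTop ℕ) s :=
      funext fun ω => WithTop.coe_max _ _
    rw [hmax]
    exact hτ.max_const s
  have hρN : ∀ ω, ρ ω ≤ N := fun ω => max_le (hτN ω) hsN
  have hρ_int : Integrable (fun ω => H (ρ ω) ω) μ :=
    integrable_stoppedValue ℕ hρ hH.integrable fun ω => WithTop.coe_le_coe.2 (hρN ω)
  calc ∫ ω in {ω | τ ω ≤ s}, H s ω ∂μ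
      = ∫ ω in {ω | τ ω ≤ s}, H (ρ ω) ω ∂μ :=
        setIntegral_congr_fun (by simpa using ℱ.le s _ (hτ.measurableSet_le s))
          fun ω (hω : τ ω ≤ s) => by rw [show ρ ω = s from max_eq_right hω]
    _ ≤ ∫ ω, H (ρ ω) ω ∂μ :=
        setIntegral_le_integral hρ_int ((ae_all_iff.2 hnn).mono fun ω hω => hω (ρ ω))
    _ ≤ ∫ ω, H (τ ω) ω ∂μ :=
        hH.integral_stopped_le_of_le hτ hρ (fun ω => le_max_left _ _) hρN

theorem integral_sum_Ioc_ite_le [SigmaFiniteFiltration μ ℱ] (hH : Supermartingale H ℱ μ)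
    (hnn : ∀ t, 0 ≤ᵐ[μ] H t) {N : ℕ} {τ : Ω → ℕ} (hτ : IsStoppingTime ℱ fun ω => (τ ω : WithTop ℕ))
    (hτN : ∀ ω, τ ω ≤ N) {c : ℝ} (hc : 0 < c) :
    ∫ ω, (∑ r ∈ Finset.Ioc (τ ω) N, if c ≤ H (r - 1) ω then (1 : ℝ) else 0) ∂μ ≤
      N * (∫ ω, H (τ ω) ω ∂μ) / c := by
  have hmeas (s : ℕ) : MeasurableSet {ω | τ ω ≤ s} := by
    simpa using ℱ.le s _ (hτ.measurableSet_le s)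
  have hint (s : ℕ) : Integrable ({ω | τ ω ≤ s}.indicator (H s)) μ :=
    (hH.integrable s).indicator (hmeas s)
  have hmarkov : ∀ᵐ ω ∂μ, (∑ r ∈ Finset.Ioc (τ ω) N, if c ≤ H (r - 1) ω then (1 : ℝ) else 0) ≤
      (∑ s ∈ Finset.range N, {ω | τ ω ≤ s}.indicator (H s) ω) / c := by
    filter_upwards [ae_all_iff.2 hnn] with ω hω
    simpa only [Set.indicator_apply, Set.mem_ofPred_eq] using
      Finset.sum_Ioc_ite_le_sum_range_ite_div hω hc (τ ω) N
  calc ∫ ω, (∑ r ∈ Finset.Ioc (τ ω) N, if c ≤ H (r - 1) ω then (1 : ℝ) else 0) ∂μ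
      ≤ ∫ ω, (∑ s ∈ Finset.range N, {ω | τ ω ≤ s}.indicator (H s) ω) / c ∂μ :=
        integral_mono_of_nonneg (ae_of_all _ fun ω => by positivity)
          ((integrable_finsetSum _ fun s _ => hint s).div_const c) hmarkov
    _ = (∑ s ∈ Finset.range N, ∫ ω in {ω | τ ω ≤ s}, H s ω ∂μ) / c := by
        rw [integral_div, integral_finsetSum _ fun s _ => hint s]
        simp only [integral_indicator (hmeas _)]
    _ ≤ (∑ _s ∈ Finset.range N, ∫ ω, H (τ ω) ω ∂μ) / c := by
        gcongr with s hs
        exact hH.setIntegral_le_integral_stopped hnn hτ hτN (Finset.mem_range.1 hs).le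
    _ = N * (∫ ω, H (τ ω) ω ∂μ) / c := by
        rw [Finset.sum_const, Finset.card_range, nsmul_eq_mul]

end MeasureTheory.Supermartingale

/-- If `(H_t)` is a non-negative supermartingale, `τ ≤ N` a.s. is a stopping time and
`c > 0`, then `E[∑_{r=τ+1}^{N} 1{H_{r-1} ≥ c}] ≤ N · E[H_τ] / c` (the sum is empty when
`τ = N`). -/
theorem stmt11 {Ω : Type*} {m : MeasurableSpace Ω} {μ : Measure Ω} [IsProbabilityMeasure μ]
    {ℱ : Filtration ℕ m} {H : ℕ → Ω → ℝ}
    (hH : Supermartingale H ℱ μ) (hnn : ∀ t, 0 ≤ᵐ[μ] H t)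
    {N : ℕ} {τ : Ω → ℕ} (hτ : IsStoppingTime ℱ (fun ω => (τ ω : WithTop ℕ))) (hτN : ∀ᵐ ω ∂μ, τ ω ≤ N)
    {c : ℝ} (hc : 0 < c) :
    ∫ ω, (∑ r ∈ Finset.Ioc (τ ω) N, if c ≤ H (r - 1) ω then (1 : ℝ) else 0) ∂μ ≤
      N * (∫ ω, H (τ ω) ω ∂μ) / c := by
  set σ : Ω → ℕ := fun ω => min (τ ω) N
  have hσ : IsStoppingTime ℱ fun ω => (σ ω : WithTop ℕ) := by
    have hmin : (fun ω => (σ ω : WithTop ℕ)) = fun ω => min (τ ω : WithTop ℕ) N :=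
      funext fun ω => WithTop.coe_min _ _
    rw [hmin]
    exact hτ.min_const N
  have hστ : ∀ᵐ ω ∂μ, σ ω = τ ω := hτN.mono fun ω => min_eq_left
  calc ∫ ω, (∑ r ∈ Finset.Ioc (τ ω) N, if c ≤ H (r - 1) ω then (1 : ℝ) else 0) ∂μ
      = ∫ ω, (∑ r ∈ Finset.Ioc (σ ω) N, if c ≤ H (r - 1) ω then (1 : ℝ) else 0) ∂μ :=
        integral_congr_ae (hστ.mono fun ω h => by simp only [h])
    _ ≤ N * (∫ ω, H (σ ω) ω ∂μ) / c :=
        hH.integral_sum_Ioc_ite_le hnn hσ (fun ω => min_le_right _ _) hc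
    _ = N * (∫ ω, H (τ ω) ω ∂μ) / c := by
        rw [integral_congr_ae (hστ.mono fun ω h => congrFun (congrArg H h) ω)]
end
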